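/- Let c > 0, a ≤ c, b ≤ c be real numbers. If ab ≤ 0 then x ↦ F(a,b;c;x) is decreasing on (0,1), and if ab ≥ 0 then it is increasing on (0,1). -/

import Mathlib

/-- Pochhammer symbol `(a)_n` for real `a`. -/
noncomputable def pochR (a : ℝ) (n : ℕ) : ℝ := ∏ i ∈ Finset.range n, (a + i)

/-- Gauss hypergeometric function `F(a,b;c;x)` with real parameters. -/
noncomputable def hypFR (a b c x : ℝ) : ℝ :=
  ∑' n : ℕ, pochR a n * pochR b n / (pochR c n * (Nat.factorial n : ℝ)) * x ^ n


namespace PochAux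

open Finset

lemma pochR_zero (a : ℝ) : pochR a 0 = 1 := by simp [pochR]

lemma pochR_succ (a : ℝ) (n : ℕ) : pochR a (n+1) = pochR a n * (a + n) := by
  simp [pochR, Finset.prod_range_succ]

lemma pochR_succ' (a : ℝ) (n : ℕ) : pochR a (n+1) = a * pochR (a+1) n := by
  simp only [pochR]
  rw [Finset.prod_range_succ']
  push_cast
  rw [mul_comm]
  congr 1
  · norm_num
  · apply Finset.prod_congr rfl
    intro i _
    ring

lemma pochR_add (a : ℝ) (m n : ℕ) : pochR a (m+n) = pochR a m * pochR (a+m) n := by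
  rw [pochR, pochR, pochR, Finset.prod_range_add]
  congr 1
  apply Finset.prod_congr rfl
  intro i _
  push_cast
  ring

lemma pochR_pos {a : ℝ} (ha : 0 < a) (n : ℕ) : 0 < pochR a n := by
  apply Finset.prod_pos; intro i _; positivity

lemma pochR_nonneg {a : ℝ} (ha : 0 ≤ a) (n : ℕ) : 0 ≤ pochR a n := by
  apply Finset.prod_nonneg; intro i _; positivity

lemma pochR_ne_zero {a : ℝ} (ha : 0 < a) (n : ℕ) : pochR a n ≠ 0 :=
  (pochR_pos ha n).ne'

/-- Pascal-style peeling of a binomial-weighted sum. -/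
lemma peel (n : ℕ) (h : ℕ → ℝ) : ∑ k ∈ range (n+2), ((n+1).choose k : ℝ) * h k
    = ∑ k ∈ range (n+1), (n.choose k : ℝ) * (h k + h (k+1)) := by
  rw [Finset.sum_range_succ' (fun k => ((n+1).choose k : ℝ) * h k) (n+1)]
  have hp : ∀ k, ((n+1).choose (k+1) : ℝ) = (n.choose k : ℝ) + (n.choose (k+1) : ℝ) := by
    intro k; rw [Nat.choose_succ_succ]; push_cast; ring
  simp only [hp, add_mul]
  rw [Finset.sum_add_distrib]
  have h2 : ∑ k ∈ range (n+1), (n.choose (k+1) : ℝ) * h (k+1) + ((n+1).choose 0 : ℝ) * h 0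
      = ∑ k ∈ range (n+1), (n.choose k : ℝ) * h k := by
    have h3 := Finset.sum_range_succ' (fun k => (n.choose k : ℝ) * h k) (n+1)
    have h4 := Finset.sum_range_succ (fun k => (n.choose k : ℝ) * h k) (n+1)
    rw [h4] at h3
    simp only [Nat.choose_succ_self, Nat.cast_zero, zero_mul, add_zero,
      Nat.choose_zero_right, Nat.cast_one, one_mul] at h3 ⊢
    exact h3.symm
  rw [add_assoc, h2]
  rw [← Finset.sum_add_distrib]
  apply Finset.sum_congr rfl
  intro k _
  ring

/-- Chu–Vandermonde, additive form. -/
lemma CV (x y : ℝ) : ∀ n : ℕ, ∑ k ∈ range (n+1),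
    (n.choose k : ℝ) * (pochR x k * pochR y (n-k)) = pochR (x+y) n := by
  intro n
  induction n with
  | zero => simp [pochR]
  | succ n ih =>
    rw [peel n (fun k => pochR x k * pochR y (n+1-k))]
    have step : ∀ k ∈ range (n+1), (n.choose k : ℝ) *
        (pochR x k * pochR y (n+1-k) + pochR x (k+1) * pochR y (n+1-(k+1)))
        = (n.choose k : ℝ) * (pochR x k * pochR y (n-k)) * (x+y+n) := by
      intro k hk
      rw [Finset.mem_range] at hk
      have hk' : k ≤ n := by omega
      have e1 : n+1-k = (n-k)+1 := by omega
      have e2 : n+1-(k+1) = n-k := by omega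
      rw [e1, e2, pochR_succ, pochR_succ]
      have e3 : ((n-k : ℕ) : ℝ) = (n : ℝ) - k := by
        push_cast [hk']; ring
      rw [e3]
      ring
    rw [Finset.sum_congr rfl step, ← Finset.sum_mul, ih, ← pochR_succ]

/-- Vandermonde-type alternating identity. -/
lemma V (e : ℝ) : ∀ n : ℕ, ∀ c : ℝ, ∑ k ∈ range (n+1),
    (n.choose k : ℝ) * ((-1)^k * pochR e k * pochR (c+k) (n-k)) = pochR (c-e) n := by
  intro n
  induction n with
  | zero => intro c; simp [pochR]
  | succ n ih =>
    intro c
    rw [peel n (fun k => (-1)^k * pochR e k * pochR (c+k) (n+1-k))]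
    have step : ∀ k ∈ range (n+1), (n.choose k : ℝ) *
        ((-1)^k * pochR e k * pochR (c+k) (n+1-k)
          + (-1)^(k+1) * pochR e (k+1) * pochR (c+((k+1 : ℕ) : ℝ)) (n+1-(k+1)))
        = (c-e) * ((n.choose k : ℝ) * ((-1)^k * pochR e k * pochR ((c+1)+k) (n-k))) := by
      intro k hk
      rw [Finset.mem_range] at hk
      have e2 : n+1-(k+1) = n-k := by omega
      have e1 : pochR (c+k) (n+1-k) = (c+k) * pochR (c+k+1) (n-k) := by
        have : n+1-k = (n-k)+1 := by omega
        rw [this, pochR_succ']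
      rw [e1, e2, pochR_succ, pow_succ]
      have e4 : (c:ℝ)+1+k = c+k+1 := by ring
      have e5 : pochR (c+((k+1 : ℕ) : ℝ)) (n-k) = pochR (c+k+1) (n-k) := by
        congr 1
        push_cast
        ring
      rw [e4, e5]
      ring
    rw [Finset.sum_congr rfl step, ← Finset.mul_sum, ih (c+1)]
    have : c+1-e = (c-e)+1 := by ring
    rw [this, ← pochR_succ']

end PochAux

namespace PochAux

open Finset

noncomputable def coefA (a b c : ℝ) (n : ℕ) : ℝ :=
  pochR a n * pochR b n / (pochR c n * (n.factorial : ℝ))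

lemma fac_ne (n : ℕ) : ((n.factorial : ℝ)) ≠ 0 :=
  Nat.cast_ne_zero.2 (Nat.factorial_ne_zero n)

lemma choose_ne {k n : ℕ} (h : k ≤ n) : ((n.choose k : ℝ)) ≠ 0 :=
  Nat.cast_ne_zero.2 (Nat.choose_pos h).ne'

lemma fac_split {k n : ℕ} (h : k ≤ n) :
    (n.factorial : ℝ) = (n.choose k : ℝ) * k.factorial * (n-k).factorial := by
  exact_mod_cast (Nat.choose_mul_factorial_mul_factorial h).symm

lemma poch_split (c : ℝ) {k n : ℕ} (h : k ≤ n) :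
    pochR c n = pochR c k * pochR (c + k) (n-k) := by
  have h2 := pochR_add c k (n-k)
  rwa [Nat.add_sub_cancel' h] at h2

/-- quotient form of Chu–Vandermonde -/
lemma CVq (x y : ℝ) (N : ℕ) : ∑ k ∈ range (N+1),
    (pochR x k / k.factorial) * (pochR y (N-k) / (N-k).factorial)
    = pochR (x+y) N / N.factorial := by
  rw [← CV x y N, Finset.sum_div]
  apply Finset.sum_congr rfl
  intro k hk
  rw [Finset.mem_range] at hk
  have hk' : k ≤ N := by omega
  rw [fac_split hk']
  have := fac_ne k; have := fac_ne (N-k); have := choose_ne hk'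
  field_simp

/-- quotient form of the alternating Vandermonde identity -/
lemma Vq {c : ℝ} (hc : 0 < c) (e : ℝ) (n : ℕ) : ∑ k ∈ range (n+1),
    (n.choose k : ℝ) * ((-1)^k * pochR e k / pochR c k)
    = pochR (c-e) n / pochR c n := by
  rw [← V e n c, Finset.sum_div]
  apply Finset.sum_congr rfl
  intro k hk
  rw [Finset.mem_range] at hk
  have hk' : k ≤ n := by omega
  rw [poch_split c hk']
  have h1 := pochR_ne_zero hc k
  have h2 := pochR_ne_zero (by positivity : (0:ℝ) < c + k) (n-k)
  field_simp

/-- Pfaff coefficient identity -/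
lemma Pq {c : ℝ} (hc : 0 < c) (a b : ℝ) (n : ℕ) :
    coefA a b c n = ∑ k ∈ range (n+1),
      (pochR a k * pochR (c-b) k * (-1)^k / (pochR c k * k.factorial))
        * (pochR (a+k) (n-k) / (n-k).factorial) := by
  have step : ∀ k ∈ range (n+1),
      (pochR a k * pochR (c-b) k * (-1)^k / (pochR c k * k.factorial))
        * (pochR (a+k) (n-k) / (n-k).factorial)
      = (pochR a n / n.factorial) *
          ((n.choose k : ℝ) * ((-1)^k * pochR (c-b) k / pochR c k)) := by
    intro k hk
    rw [Finset.mem_range] at hk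
    have hk' : k ≤ n := by omega
    rw [poch_split a hk', fac_split hk']
    have := fac_ne k; have := fac_ne (n-k); have := choose_ne hk'
    have := pochR_ne_zero hc k
    field_simp
  rw [Finset.sum_congr rfl step, ← Finset.mul_sum, Vq hc (c-b) n,
    show c-(c-b) = b from by ring]
  unfold coefA
  have := fac_ne n; have := pochR_ne_zero hc n
  field_simp

/-- triangle sum swap -/
lemma tri (n : ℕ) (g : ℕ → ℕ → ℝ) :
    ∑ k ∈ range (n+1), ∑ i ∈ range (n+1-k), g k i
    = ∑ i ∈ range (n+1), ∑ k ∈ range (n+1-i), g k i := by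
  rw [Finset.sum_sigma', Finset.sum_sigma']
  apply Finset.sum_nbij' (i := fun p => (⟨p.2, p.1⟩ : (_ : ℕ) × ℕ))
    (j := fun p => (⟨p.2, p.1⟩ : (_ : ℕ) × ℕ)) <;>
    simp only [Finset.mem_sigma, Finset.mem_range] <;> intros
  · omega
  · omega
  · trivial
  · trivial
  · trivial

end PochAux

namespace PochAux

open Finset

/-- Euler transformation coefficient identity -/
lemma Eq1 {c : ℝ} (hc : 0 < c) (a b : ℝ) (n : ℕ) :
    ∑ k ∈ range (n+1), (pochR (a+b-c) k / k.factorial) * coefA (c-a) (c-b) c (n-k)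
      = coefA a b c n := by
  -- expand the inner coefficient via Pfaff
  have expand : ∀ k ∈ range (n+1),
      (pochR (a+b-c) k / k.factorial) * coefA (c-a) (c-b) c (n-k)
      = ∑ i ∈ range (n+1-k),
          (pochR (a+b-c) k / k.factorial) *
          ((pochR (c-a) i * pochR b i * (-1)^i / (pochR c i * i.factorial))
            * (pochR (c-a+i) (n-k-i) / (n-k-i).factorial)) := by
    intro k hk
    rw [Finset.mem_range] at hk
    rw [Pq hc (c-a) (c-b) (n-k), show c-(c-b) = b from by ring, Finset.mul_sum,
      show n-k+1 = n+1-k from by omega]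
  rw [Finset.sum_congr rfl expand, tri]
  -- inner sums via Chu–Vandermonde
  have inner : ∀ i ∈ range (n+1),
      (∑ k ∈ range (n+1-i),
          (pochR (a+b-c) k / k.factorial) *
          ((pochR (c-a) i * pochR b i * (-1)^i / (pochR c i * i.factorial))
            * (pochR (c-a+i) (n-k-i) / (n-k-i).factorial)))
      = (pochR (c-a) i * pochR b i * (-1)^i / (pochR c i * i.factorial))
          * (pochR (b+i) (n-i) / (n-i).factorial) := by
    intro i hi
    rw [Finset.mem_range] at hi
    have h1 : ∀ k ∈ range (n+1-i),
        (pochR (a+b-c) k / k.factorial) *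
          ((pochR (c-a) i * pochR b i * (-1)^i / (pochR c i * i.factorial))
            * (pochR (c-a+i) (n-k-i) / (n-k-i).factorial))
        = (pochR (c-a) i * pochR b i * (-1)^i / (pochR c i * i.factorial)) *
            ((pochR (a+b-c) k / k.factorial)
              * (pochR (c-a+i) (n-i-k) / (n-i-k).factorial)) := by
      intro k hk
      rw [show n-k-i = n-i-k from by omega]
      ring
    rw [Finset.sum_congr rfl h1, ← Finset.mul_sum]
    congr 1
    have h2 := CVq (a+b-c) (c-a+i) (n-i)
    rw [show (a+b-c) + (c-a+(i:ℝ)) = b+i from by ring] at h2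
    rw [show n+1-i = (n-i)+1 from by omega, h2]
  rw [Finset.sum_congr rfl inner]
  -- final Vandermonde
  have step : ∀ i ∈ range (n+1),
      (pochR (c-a) i * pochR b i * (-1)^i / (pochR c i * i.factorial))
          * (pochR (b+i) (n-i) / (n-i).factorial)
      = (pochR b n / n.factorial) *
          ((n.choose i : ℝ) * ((-1)^i * pochR (c-a) i / pochR c i)) := by
    intro i hi
    rw [Finset.mem_range] at hi
    have hi' : i ≤ n := by omega
    rw [poch_split b hi', fac_split hi']
    have := fac_ne i; have := fac_ne (n-i); have := choose_ne hi'
    have := pochR_ne_zero hc i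
    field_simp
  rw [Finset.sum_congr rfl step, ← Finset.mul_sum, Vq hc (c-a) n,
    show c-(c-a) = a from by ring]
  unfold coefA
  have := fac_ne n; have := pochR_ne_zero hc n
  field_simp

end PochAux

namespace PochAux

open Filter Finset

lemma hypFR_eq (a b c x : ℝ) : hypFR a b c x = ∑' n : ℕ, coefA a b c n * x^n := rfl

lemma coefA_succ {c : ℝ} (hc : 0 < c) (a b : ℝ) (n : ℕ) :
    coefA a b c (n+1) = coefA a b c n * ((a+n)*(b+n)/((c+n)*(n+1))) := by
  unfold coefA
  rw [pochR_succ, pochR_succ, pochR_succ, Nat.factorial_succ]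
  have h1 := pochR_ne_zero hc n
  have h2 := fac_ne n
  have h3 : (c:ℝ)+n ≠ 0 := by positivity
  have h4 : ((n:ℝ)+1) ≠ 0 := by positivity
  push_cast
  field_simp

lemma coefA_deriv {c : ℝ} (hc : 0 < c) (a b : ℝ) (n : ℕ) :
    coefA a b c (n+1) * ((n:ℝ)+1) = a*b/c * coefA (a+1) (b+1) (c+1) n := by
  unfold coefA
  rw [pochR_succ' a, pochR_succ' b, pochR_succ' c, Nat.factorial_succ]
  have h1 := pochR_ne_zero (by positivity : (0:ℝ) < c+1) n
  have h2 := fac_ne n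
  have h3 : (c:ℝ) ≠ 0 := hc.ne'
  have h4 : ((n:ℝ)+1) ≠ 0 := by positivity
  push_cast
  field_simp

lemma ratio_tendsto (a b : ℝ) {c : ℝ} (hc : 0 < c) :
    Tendsto (fun n : ℕ => (a+n)*(b+n)/((c+n)*((n:ℝ)+1))) atTop (nhds 1) := by
  have key : ∀ n : ℕ, (a+n)*(b+n)/((c+n)*((n:ℝ)+1))
      = ((a-1)/((n:ℝ)+1) + 1) * ((b-c)/(c+n) + 1) := by
    intro n
    have h3 : (c:ℝ)+n ≠ 0 := by positivity
    have h4 : ((n:ℝ)+1) ≠ 0 := by positivity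
    field_simp
    ring
  simp only [key]
  have t1 : Tendsto (fun n : ℕ => (a-1)/((n:ℝ)+1) + 1) atTop (nhds 1) := by
    have := Tendsto.const_div_atTop
      (tendsto_atTop_add_const_right atTop (1:ℝ) tendsto_natCast_atTop_atTop) (a-1)
    simpa using this.add tendsto_const_nhds
  have t2 : Tendsto (fun n : ℕ => (b-c)/(c+(n:ℝ)) + 1) atTop (nhds 1) := by
    have := Tendsto.const_div_atTop
      (tendsto_atTop_add_const_left atTop (c:ℝ) tendsto_natCast_atTop_atTop) (b-c)
    simpa using this.add tendsto_const_nhds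
  simpa using t1.mul t2

lemma summable_coef (a b : ℝ) {c x : ℝ} (hc : 0 < c) (hx : |x| < 1) :
    Summable (fun n => coefA a b c n * x^n) := by
  set r := (1+|x|)/2 with hr
  have hr1 : r < 1 := by rw [hr]; linarith
  apply summable_of_ratio_norm_eventually_le hr1
  have hq : Tendsto (fun n : ℕ => |(a+n)*(b+n)/((c+n)*((n:ℝ)+1))| * |x|) atTop
      (nhds (1 * |x|)) := by
    have := ((ratio_tendsto a b hc).abs).mul_const |x|
    simpa using this
  have hlt : ∀ᶠ n : ℕ in atTop, |(a+n)*(b+n)/((c+n)*((n:ℝ)+1))| * |x| ≤ r := by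
    apply Filter.Tendsto.eventually_le_const _ hq
    rw [one_mul, hr]; linarith
  filter_upwards [hlt] with n hn
  rw [coefA_succ hc a b n]
  have : ‖coefA a b c n * ((a+n)*(b+n)/((c+n)*((n:ℝ)+1))) * x^(n+1)‖
      = (|(a+n)*(b+n)/((c+n)*((n:ℝ)+1))| * |x|) * ‖coefA a b c n * x^n‖ := by
    simp only [norm_mul, Real.norm_eq_abs, abs_mul, pow_succ, abs_pow]
    ring
  rw [this]
  apply mul_le_mul_of_nonneg_right hn (norm_nonneg _)

end PochAux

namespace PochAux

open Filter Finset

lemma summable_deriv_abs (a b : ℝ) {c r : ℝ} (hc : 0 < c) (hr0 : 0 < r) (hr : |r| < 1) :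
    Summable (fun n : ℕ => |coefA a b c n| * ((n:ℕ) * r^(n-1))) := by
  rw [← summable_nat_add_iff 1]
  have h : ∀ n : ℕ, |coefA a b c (n+1)| * (((n+1:ℕ):ℝ) * r^((n+1)-1))
      = |a*b/c| * |coefA (a+1) (b+1) (c+1) n * r^n| := by
    intro n
    have key := coefA_deriv hc a b n
    calc |coefA a b c (n+1)| * (((n+1:ℕ):ℝ) * r^((n+1)-1))
        = |coefA a b c (n+1) * ((n:ℝ)+1)| * r^n := by
          rw [abs_mul, abs_of_nonneg (by positivity : (0:ℝ) ≤ (n:ℝ)+1)]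
          push_cast
          ring
      _ = |a*b/c * coefA (a+1) (b+1) (c+1) n| * r^n := by rw [key]
      _ = |a*b/c| * |coefA (a+1) (b+1) (c+1) n * r^n| := by
          rw [abs_mul, abs_mul, abs_pow, abs_of_pos hr0]
          ring
  simp only [h]
  exact ((summable_coef (a+1) (b+1) (by positivity) hr).abs).mul_left _

lemma summable_deriv (a b : ℝ) {c x : ℝ} (hc : 0 < c) (hx : |x| < 1) :
    Summable (fun n : ℕ => coefA a b c n * ((n:ℕ) * x^(n-1))) := by
  rw [← summable_nat_add_iff 1]
  have h : ∀ n : ℕ, coefA a b c (n+1) * (((n+1:ℕ):ℝ) * x^((n+1)-1))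
      = a*b/c * (coefA (a+1) (b+1) (c+1) n * x^n) := by
    intro n
    have key := coefA_deriv hc a b n
    push_cast
    calc coefA a b c (n+1) * (((n:ℝ)+1) * x^n)
        = (coefA a b c (n+1) * ((n:ℝ)+1)) * x^n := by ring
      _ = a*b/c * (coefA (a+1) (b+1) (c+1) n * x^n) := by rw [key]; ring
  simp only [h]
  exact (summable_coef (a+1) (b+1) (by positivity) hx).mul_left _

lemma hasDerivAt_hypFR (a b : ℝ) {c x : ℝ} (hc : 0 < c) (hx : |x| < 1) :
    HasDerivAt (fun y => hypFR a b c y) (a*b/c * hypFR (a+1) (b+1) (c+1) x) x := by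
  set r := (1+|x|)/2 with hrdef
  have hr0 : (0:ℝ) < r := by rw [hrdef]; positivity
  have hr1 : r < 1 := by rw [hrdef]; linarith [abs_lt.1 (by exact hx)]
  have hrabs : |r| < 1 := by rw [abs_of_pos hr0]; exact hr1
  have hxr : |x| < r := by rw [hrdef]; linarith
  have hmem : x ∈ Set.Ioo (-r) r := by constructor <;> [linarith [abs_lt.1 hxr] ; exact (abs_lt.1 hxr).2]
  have key : HasDerivAt (fun z => ∑' n : ℕ, coefA a b c n * z^n)
      (∑' n : ℕ, coefA a b c n * ((n:ℕ) * x^(n-1))) x := by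
    apply hasDerivAt_tsum_of_isPreconnected (summable_deriv_abs a b hc hr0 hrabs)
      isOpen_Ioo (convex_Ioo _ _).isPreconnected
      (g := fun n y => coefA a b c n * y^n)
      (g' := fun n y => coefA a b c n * ((n:ℕ) * y^(n-1)))
      (fun n y _ => (hasDerivAt_pow n y).const_mul _) _ hmem
      (summable_coef a b hc hx) hmem
    intro n y hy
    have hyr : |y| ≤ r := by
      rw [abs_le]; exact ⟨hy.1.le, hy.2.le⟩
    rw [Real.norm_eq_abs, abs_mul, abs_mul, abs_pow,
      abs_of_nonneg (Nat.cast_nonneg (α := ℝ) n)]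
    gcongr
  have e1 : (fun z => ∑' n : ℕ, coefA a b c n * z^n) = fun y => hypFR a b c y := by
    funext y
    rw [hypFR_eq]
  have e2 : (∑' n : ℕ, coefA a b c n * ((n:ℕ) * x^(n-1)))
      = a*b/c * hypFR (a+1) (b+1) (c+1) x := by
    rw [Summable.tsum_eq_zero_add (summable_deriv a b hc hx)]
    simp only [Nat.cast_zero, zero_mul, mul_zero, zero_add, Nat.cast_ofNat]
    have h : ∀ n : ℕ, coefA a b c (n+1) * (((n+1:ℕ):ℝ) * x^((n+1)-1))
        = a*b/c * (coefA (a+1) (b+1) (c+1) n * x^n) := by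
      intro n
      have key2 := coefA_deriv hc a b n
      push_cast
      calc coefA a b c (n+1) * (((n:ℝ)+1) * x^n)
          = (coefA a b c (n+1) * ((n:ℝ)+1)) * x^n := by ring
        _ = a*b/c * (coefA (a+1) (b+1) (c+1) n * x^n) := by rw [key2]; ring
    rw [tsum_congr h, tsum_mul_left, hypFR_eq]
  rw [e1, e2] at key
  exact key

end PochAux

namespace PochAux

open Filter Finset

lemma coefA_same {c : ℝ} (hc : 0 < c) (s : ℝ) (n : ℕ) :
    coefA s c c n = pochR s n / n.factorial := by
  unfold coefA
  have := pochR_ne_zero hc n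
  have := fac_ne n
  field_simp

lemma norm_summable_coef (a b : ℝ) {c x : ℝ} (hc : 0 < c) (hx : |x| < 1) :
    Summable (fun n => ‖coefA a b c n * x^n‖) := by
  simp only [Real.norm_eq_abs]
  exact (summable_coef a b hc hx).abs

lemma euler_prod (a b : ℝ) {c x : ℝ} (hc : 0 < c) (hx : |x| < 1) :
    hypFR (a+b-c) c c x * hypFR (c-a) (c-b) c x = hypFR a b c x := by
  rw [hypFR_eq, hypFR_eq, hypFR_eq,
    tsum_mul_tsum_eq_tsum_sum_antidiagonal_of_summable_norm
      (norm_summable_coef (a+b-c) c hc hx) (norm_summable_coef (c-a) (c-b) hc hx)]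
  apply tsum_congr
  intro n
  rw [Finset.Nat.sum_antidiagonal_eq_sum_range_succ_mk]
  have step : ∀ k ∈ range (n+1),
      (coefA (a+b-c) c c k * x^k) * (coefA (c-a) (c-b) c (n-k) * x^(n-k))
      = ((pochR (a+b-c) k / k.factorial) * coefA (c-a) (c-b) c (n-k)) * x^n := by
    intro k hk
    rw [Finset.mem_range] at hk
    rw [coefA_same hc]
    have : x^k * x^(n-k) = x^n := by
      rw [← pow_add]
      congr 1
      omega
    rw [← this]
    ring
  rw [Finset.sum_congr rfl step, ← Finset.sum_mul, Eq1 hc]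

lemma pochR_zero_base (n : ℕ) (hn : n ≠ 0) : pochR 0 n = 0 := by
  obtain ⟨m, rfl⟩ := Nat.exists_eq_succ_of_ne_zero hn
  rw [pochR_succ']
  ring

lemma P_inv {c : ℝ} (hc : 0 < c) (s : ℝ) {x : ℝ} (hx : |x| < 1) :
    hypFR s c c x * hypFR (-s) c c x = 1 := by
  rw [hypFR_eq, hypFR_eq,
    tsum_mul_tsum_eq_tsum_sum_antidiagonal_of_summable_norm
      (norm_summable_coef s c hc hx) (norm_summable_coef (-s) c hc hx)]
  rw [tsum_eq_single 0]
  · simp [coefA, pochR]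
  · intro n hn
    rw [Finset.Nat.sum_antidiagonal_eq_sum_range_succ_mk]
    have step : ∀ k ∈ range (n+1),
        (coefA s c c k * x^k) * (coefA (-s) c c (n-k) * x^(n-k))
        = ((pochR s k / k.factorial) * (pochR (-s) (n-k) / (n-k).factorial)) * x^n := by
      intro k hk
      rw [Finset.mem_range] at hk
      rw [coefA_same hc, coefA_same hc]
      have : x^k * x^(n-k) = x^n := by
        rw [← pow_add]; congr 1; omega
      rw [← this]
      ring
    rw [Finset.sum_congr rfl step, ← Finset.sum_mul, CVq s (-s) n,
      show s + -s = (0:ℝ) from by ring, pochR_zero_base n hn]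
    simp

lemma hypFR_at_zero (a b c : ℝ) : hypFR a b c 0 = 1 := by
  rw [hypFR_eq, tsum_eq_single 0]
  · simp [coefA, pochR]
  · intro n hn
    rw [zero_pow hn, mul_zero]

lemma P_pos {c : ℝ} (hc : 0 < c) (s : ℝ) {x : ℝ} (hx0 : 0 ≤ x) (hx1 : x < 1) :
    0 < hypFR s c c x := by
  have habs : ∀ y : ℝ, 0 ≤ y → y ≤ x → |y| < 1 := by
    intro y h1 h2
    rw [abs_of_nonneg h1]; linarith
  have hne : ∀ y : ℝ, 0 ≤ y → y ≤ x → hypFR s c c y ≠ 0 := by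
    intro y h1 h2 h0
    have := P_inv hc s (habs y h1 h2)
    rw [h0, zero_mul] at this
    norm_num at this
  have hcont : ContinuousOn (fun y => hypFR s c c y) (Set.Icc 0 x) := by
    intro y hy
    exact ((hasDerivAt_hypFR s c hc
      (habs y hy.1 hy.2)).differentiableAt.continuousAt).continuousWithinAt
  by_contra hle
  push_neg at hle
  have hlt : hypFR s c c x < 0 :=
    lt_of_le_of_ne hle (hne x hx0 le_rfl)
  have h0mem : (0:ℝ) ∈ Set.Icc (hypFR s c c x) (hypFR s c c 0) := by
    rw [hypFR_at_zero]
    exact ⟨hlt.le, by norm_num⟩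
  obtain ⟨z, hz, hz0⟩ := intermediate_value_Icc' hx0 hcont h0mem
  exact hne z hz.1 hz.2 hz0

lemma hyp_nonneg {a b c x : ℝ} (hc : 0 < c) (ha : a ≤ c) (hb : b ≤ c)
    (hx0 : 0 ≤ x) (hx1 : x < 1) : 0 ≤ hypFR a b c x := by
  have hxabs : |x| < 1 := by rw [abs_of_nonneg hx0]; exact hx1
  rw [← euler_prod a b hc hxabs]
  apply mul_nonneg (P_pos hc (a+b-c) hx0 hx1).le
  rw [hypFR_eq]
  apply tsum_nonneg
  intro n
  apply mul_nonneg _ (pow_nonneg hx0 n)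
  unfold coefA
  apply div_nonneg
  · exact mul_nonneg (pochR_nonneg (by linarith) n) (pochR_nonneg (by linarith) n)
  · exact mul_nonneg (pochR_pos hc n).le (Nat.cast_nonneg _)

end PochAux


open PochAux

theorem stmt2 (a b c : ℝ) (hc : 0 < c) (ha : a ≤ c) (hb : b ≤ c) :
    (a * b ≤ 0 → AntitoneOn (fun x => hypFR a b c x) (Set.Ioo 0 1)) ∧
    (0 ≤ a * b → MonotoneOn (fun x => hypFR a b c x) (Set.Ioo 0 1)) := by
  have habs : ∀ x : ℝ, x ∈ Set.Ioo (0:ℝ) 1 → |x| < 1 := by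
    intro x hx
    rw [abs_of_pos hx.1]; exact hx.2
  have hcont : ContinuousOn (fun x => hypFR a b c x) (Set.Ioo 0 1) := by
    intro x hx
    exact ((hasDerivAt_hypFR a b hc (habs x hx)).differentiableAt.continuousAt).continuousWithinAt
  have hdiff : DifferentiableOn ℝ (fun x => hypFR a b c x) (interior (Set.Ioo (0:ℝ) 1)) := by
    rw [isOpen_Ioo.interior_eq]
    intro x hx
    exact (hasDerivAt_hypFR a b hc (habs x hx)).differentiableAt.differentiableWithinAt
  have hderiv : ∀ x ∈ Set.Ioo (0:ℝ) 1,
      deriv (fun x => hypFR a b c x) x = a*b/c * hypFR (a+1) (b+1) (c+1) x := by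
    intro x hx
    exact (hasDerivAt_hypFR a b hc (habs x hx)).deriv
  have hpos : ∀ x ∈ Set.Ioo (0:ℝ) 1, 0 ≤ hypFR (a+1) (b+1) (c+1) x := by
    intro x hx
    exact hyp_nonneg (by linarith) (by linarith) (by linarith) hx.1.le hx.2
  constructor
  · intro hab
    apply antitoneOn_of_deriv_nonpos (convex_Ioo 0 1) hcont hdiff
    rw [isOpen_Ioo.interior_eq]
    intro x hx
    rw [hderiv x hx]
    apply mul_nonpos_of_nonpos_of_nonneg _ (hpos x hx)
    exact div_nonpos_of_nonpos_of_nonneg hab hc.le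
  · intro hab
    apply monotoneOn_of_deriv_nonneg (convex_Ioo 0 1) hcont hdiff
    rw [isOpen_Ioo.interior_eq]
    intro x hx
    rw [hderiv x hx]
    apply mul_nonneg _ (hpos x hx)
    positivity
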